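/- Let A be a c.e. subset of ℕ. Suppose (R_i)_{i∈ℕ} and (D_i)_{i∈ℕ} are two families of pairwise disjoint c.e. sets, each of which generates D(A), and every R_i is computable. Then every D_i is computable. -/

import Mathlib

open Set Function

/-- A set of naturals is computably enumerable (c.e.) -/
def CESet (A : Set ℕ) : Prop := REPred (· ∈ A)

/-- A set of naturals is computable -/
def ComputableSet (A : Set ℕ) : Prop := ComputablePred (· ∈ A)

/-- X ⊆* Y : X is almost contained in Y -/
def SubsetStar (X Y : Set ℕ) : Prop := (X \ Y).Finite

/-- X =* Y : X and Y differ by a finite set -/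
def EqStar (X Y : Set ℕ) : Prop := (X \ Y).Finite ∧ (Y \ X).Finite

/-- G is a generating set for 𝒟(A): a countable family of c.e. sets, each disjoint
from A, such that every c.e. set disjoint from A is almost covered by finitely many
members of G. -/
def Generates (A : Set ℕ) (G : Set (Set ℕ)) : Prop :=
  G.Countable ∧ (∀ X ∈ G, CESet X) ∧ (∀ X ∈ G, Disjoint X A) ∧
  ∀ D : Set ℕ, CESet D → Disjoint D A →
    ∃ F : Set (Set ℕ), F ⊆ G ∧ F.Finite ∧ SubsetStar D (⋃₀ F)

/-- S is simple -/
def SimpleSet (S : Set ℕ) : Prop :=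
  CESet S ∧ Sᶜ.Infinite ∧ ∀ W : Set ℕ, CESet W → Disjoint W S → W.Finite

/-- A is 𝒟-maximal -/
def DMaximal (A : Set ℕ) : Prop :=
  CESet A ∧ ∀ W : Set ℕ, CESet W → ∃ D : Set ℕ, CESet D ∧ Disjoint D A ∧
    (SubsetStar W (A ∪ D) ∨ EqStar (W ∪ A ∪ D) Set.univ)

/-- M is r-maximal -/
def RMaximal (M : Set ℕ) : Prop :=
  CESet M ∧ Mᶜ.Infinite ∧
    ∀ R : Set ℕ, ComputableSet R → (R ∩ Mᶜ).Finite ∨ (Rᶜ ∩ Mᶜ).Finite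

/-- M is maximal -/
def MaximalSet (M : Set ℕ) : Prop :=
  CESet M ∧ Mᶜ.Infinite ∧
    ∀ W : Set ℕ, CESet W → M ⊆ W → (W \ M).Finite ∨ Wᶜ.Finite

/-- B is atomless -/
def AtomlessSet (B : Set ℕ) : Prop :=
  ∀ C : Set ℕ, CESet C → B ⊆ C → Cᶜ.Infinite →
    ∃ E : Set ℕ, CESet E ∧ SubsetStar C E ∧ (E \ C).Infinite ∧ Eᶜ.Infinite

/-- A0, A1 form a Friedberg splitting of A -/
def FriedbergSplitting (A0 A1 A : Set ℕ) : Prop :=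
  CESet A0 ∧ CESet A1 ∧ Disjoint A0 A1 ∧ A0 ∪ A1 = A ∧
    ∀ W : Set ℕ, CESet W → ¬ CESet (W \ A) → ¬ CESet (W \ A0) ∧ ¬ CESet (W \ A1)

/-- E is a major subset of D -/
def MajorIn (E D : Set ℕ) : Prop :=
  CESet E ∧ CESet D ∧ E ⊆ D ∧ (D \ E).Infinite ∧
    ∀ W : Set ℕ, CESet W → SubsetStar Dᶜ W → SubsetStar Eᶜ W

/-- H is hh-simple: the lattice of c.e. supersets of H mod finite is a boolean algebra -/
def HHSimple (H : Set ℕ) : Prop :=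
  CESet H ∧ Hᶜ.Infinite ∧
    ∀ W : Set ℕ, CESet W → ∃ V : Set ℕ, CESet V ∧
      EqStar ((W ∪ H) ∩ (V ∪ H)) H ∧ EqStar (W ∪ V ∪ H) Set.univ

/-- A is strongly r-separable -/
def StronglyRSeparable (A : Set ℕ) : Prop :=
  ∀ B : Set ℕ, CESet B → Disjoint B A →
    ∃ C : Set ℕ, ComputableSet C ∧ B ⊆ C ∧ Disjoint C A ∧ (C \ B).Infinite

/-- Structure of a Type 5 generating family: D0 together with the R_i. -/
def Type5Family (D0 : Set ℕ) (R : ℕ → Set ℕ) : Prop :=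
  CESet D0 ∧ ¬ ComputableSet D0 ∧ D0.Infinite ∧
  Function.Injective R ∧ (∀ i, D0 ≠ R i) ∧
  (∀ i, ComputableSet (R i) ∧ (R i).Infinite) ∧
  Pairwise (Function.onFun Disjoint R) ∧
  (∀ i, Disjoint D0 (R i))

/-- Structure of a Type 7 generating family: D0 together with the R_i. -/
def Type7Family (D0 : Set ℕ) (R : ℕ → Set ℕ) : Prop :=
  CESet D0 ∧ ¬ ComputableSet D0 ∧
  Function.Injective R ∧ (∀ i, D0 ≠ R i) ∧
  (∀ i, ComputableSet (R i) ∧ (R i).Infinite) ∧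
  Pairwise (Function.onFun Disjoint R) ∧
  {i : ℕ | (D0 ∩ R i).Nonempty}.Infinite

/-- Structure of a Type 8 generating family: the D_i together with the R_i. -/
def Type8Family (D R : ℕ → Set ℕ) : Prop :=
  Function.Injective D ∧ Function.Injective R ∧ (∀ i j, D i ≠ R j) ∧
  (∀ i, CESet (D i) ∧ ¬ ComputableSet (D i)) ∧
  Pairwise (Function.onFun Disjoint D) ∧
  (∀ i, ComputableSet (R i) ∧ (R i).Infinite) ∧
  Pairwise (Function.onFun Disjoint R)

/-- Structure of a Type 9 generating family: the nested D_i together with the R_i. -/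
def Type9Family (D R : ℕ → Set ℕ) : Prop :=
  Function.Injective R ∧ (∀ i j, D i ≠ R j) ∧
  (∀ i, ComputableSet (R i) ∧ (R i).Infinite) ∧
  Pairwise (Function.onFun Disjoint R) ∧
  (∀ i, CESet (D i) ∧ ¬ ComputableSet (D i) ∧ (D i).Infinite) ∧
  (∀ l, D l ⊆ D (l + 1)) ∧
  (∀ l, ¬ CESet (D (l + 1) \ D l)) ∧
  (∀ l, {j : ℕ | (R j \ D l).Infinite}.Infinite)

def IsType1 (G : Set (Set ℕ)) : Prop := G = {∅}

def IsType2 (G : Set (Set ℕ)) : Prop :=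
  ∃ R : Set ℕ, G = {R} ∧ ComputableSet R ∧ R.Infinite

def IsType3 (G : Set (Set ℕ)) : Prop :=
  ∃ W : Set ℕ, G = {W} ∧ CESet W ∧ ¬ ComputableSet W ∧ W.Infinite

def IsType4 (G : Set (Set ℕ)) : Prop :=
  ∃ R : ℕ → Set ℕ, G = Set.range R ∧ Function.Injective R ∧
    (∀ i, ComputableSet (R i) ∧ (R i).Infinite) ∧
    Pairwise (Function.onFun Disjoint R)

def IsType5 (G : Set (Set ℕ)) : Prop :=
  ∃ (D0 : Set ℕ) (R : ℕ → Set ℕ), G = insert D0 (Set.range R) ∧ Type5Family D0 R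

def IsType6 (G : Set (Set ℕ)) : Prop :=
  ∃ D : ℕ → Set ℕ, G = Set.range D ∧ Function.Injective D ∧
    (∀ i, CESet (D i) ∧ ¬ ComputableSet (D i) ∧ (D i).Infinite) ∧
    Pairwise (Function.onFun Disjoint D)

def IsType7 (G : Set (Set ℕ)) : Prop :=
  ∃ (D0 : Set ℕ) (R : ℕ → Set ℕ), G = insert D0 (Set.range R) ∧ Type7Family D0 R

def IsType8 (G : Set (Set ℕ)) : Prop :=
  ∃ D R : ℕ → Set ℕ, G = Set.range D ∪ Set.range R ∧ Type8Family D R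

def IsType9 (G : Set (Set ℕ)) : Prop :=
  ∃ D R : ℕ → Set ℕ, G = Set.range D ∪ Set.range R ∧ Type9Family D R

def IsType10 (G : Set (Set ℕ)) : Prop :=
  ∃ D : ℕ → Set ℕ, G = Set.range D ∧
    (∀ i, CESet (D i) ∧ ¬ ComputableSet (D i) ∧ (D i).Infinite) ∧
    (∀ l, D l ⊆ D (l + 1)) ∧
    (∀ l, ¬ CESet (D (l + 1) \ D l))

/-- G is a generating set of Type n (n = 1, …, 10). -/
def GenTypeN (n : ℕ) (G : Set (Set ℕ)) : Prop :=
  match n with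
  | 1 => IsType1 G
  | 2 => IsType2 G
  | 3 => IsType3 G
  | 4 => IsType4 G
  | 5 => IsType5 G
  | 6 => IsType6 G
  | 7 => IsType7 G
  | 8 => IsType8 G
  | 9 => IsType9 G
  | 10 => IsType10 G
  | _ => False

/-- The c.e. set A is of Type n: 𝒟(A) has a generating set of Type n
but no generating set of any Type m < n. -/
def SetOfType (A : Set ℕ) (n : ℕ) : Prop :=
  (∃ G : Set (Set ℕ), Generates A G ∧ GenTypeN n G) ∧
  ∀ m : ℕ, m < n → ¬ ∃ G : Set (Set ℕ), Generates A G ∧ GenTypeN m G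

/-- (F_i) is an A-special list. -/
def ASpecialList (A : Set ℕ) (F : ℕ → Set ℕ) : Prop :=
  F 0 = A ∧ (∀ i, CESet (F i) ∧ ¬ ComputableSet (F i)) ∧
  Pairwise (Function.onFun Disjoint F) ∧
  ∀ W : Set ℕ, CESet W → ∃ i : ℕ,
    SubsetStar W (⋃ l ≤ i, F l) ∨ EqStar (W ∪ ⋃ l ≤ i, F l) Set.univ

/-!
Since the `R`'s are computable, `D i ⊆* U` for a computable `U` disjoint from `A` (a finite union
of `R`'s); since the `D`'s generate, `U ⊆* D i ∪ V` where `V`, the union of the other `D j` needed,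
is c.e. and disjoint from `D i`. So `(D i)ᶜ` agrees up to a finite set with the c.e. set `Uᶜ ∪ V`,
and `D i` is computable by Post's theorem.
-/

section Computability

variable {α : Type*} [Primcodable α]

theorem REPred.or {p q : α → Prop} (hp : REPred p) (hq : REPred q) :
    REPred fun a => p a ∨ q a := by
  obtain ⟨k, hk, H⟩ := Partrec.merge' hp hq
  exact hk.dom_re.of_eq fun a => by rw [(H a).2]; simp [Part.assert]

theorem REPred.and {p q : α → Prop} (hp : REPred p) (hq : REPred q) :
    REPred fun a => p a ∧ q a := by
  have : Partrec fun a => (Part.assert (p a) fun _ => Part.some ()).bind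
      fun _ => Part.assert (q a) fun _ => Part.some () :=
    hp.bind (hq.comp Computable.fst).to₂
  exact this.dom_re.of_eq fun a => by simp [Part.assert]

theorem ComputablePred.or {p q : α → Prop} :
    ComputablePred p → ComputablePred q → ComputablePred fun a => p a ∨ q a
  | ⟨_, hp⟩, ⟨_, hq⟩ =>
    Computable.computablePred <| Primrec.or.to_comp.comp hp hq |>.of_eq <| by simp

theorem ComputablePred.eq_const (x : α) : ComputablePred (· = x) :=
  (Primrec.eq.comp .id (.const x) : PrimrecPred (· = x)).computablePred

theorem ComputablePred.mem_of_finite {S : Set α} (hS : S.Finite) : ComputablePred (· ∈ S) := by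
  induction S, hS using Set.Finite.induction_on with
  | empty => exact computable_iff.2 ⟨fun _ => false, Computable.const _, by simp⟩
  | @insert x S _ _ ih => exact ((eq_const x).or ih).of_eq fun a => Set.mem_insert_iff.symm

end Computability

theorem ComputableSet.ceSet {X : Set ℕ} (h : ComputableSet X) : CESet X := h.to_re

theorem ComputableSet.of_finite {X : Set ℕ} (h : X.Finite) : ComputableSet X :=
  ComputablePred.mem_of_finite h

theorem ComputableSet.compl {X : Set ℕ} (h : ComputableSet X) : ComputableSet Xᶜ :=
  h.not

theorem ComputableSet.union {X Y : Set ℕ} (hX : ComputableSet X) (hY : ComputableSet Y) :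
    ComputableSet (X ∪ Y) :=
  hX.or hY

theorem ComputableSet.sUnion {F : Set (Set ℕ)} (hF : F.Finite) (h : ∀ X ∈ F, ComputableSet X) :
    ComputableSet (⋃₀ F) := by
  induction F, hF using Set.Finite.induction_on with
  | empty => simpa using ComputableSet.of_finite Set.finite_empty
  | @insert X F _ _ ih =>
    rw [Set.sUnion_insert]
    exact (h X (Set.mem_insert _ _)).union (ih fun Y hY => h Y (Set.mem_insert_of_mem _ hY))

theorem CESet.union {X Y : Set ℕ} (hX : CESet X) (hY : CESet Y) : CESet (X ∪ Y) :=
  hX.or hY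

theorem CESet.sUnion {F : Set (Set ℕ)} (hF : F.Finite) (h : ∀ X ∈ F, CESet X) :
    CESet (⋃₀ F) := by
  induction F, hF using Set.Finite.induction_on with
  | empty => simpa using (ComputableSet.of_finite Set.finite_empty).ceSet
  | @insert X F _ _ ih =>
    rw [Set.sUnion_insert]
    exact (h X (Set.mem_insert _ _)).union (ih fun Y hY => h Y (Set.mem_insert_of_mem _ hY))

theorem CESet.of_eqStar {X Y : Set ℕ} (hX : CESet X) (h : EqStar X Y) : CESet Y := by
  have hXY : CESet (X \ (X \ Y)) := hX.and (ComputableSet.of_finite h.1).compl.ceSet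
  refine (hXY.union (ComputableSet.of_finite h.2).ceSet).of_eq fun a => ?_
  simp only [Set.mem_union, Set.mem_sdiff]
  tauto

theorem ComputableSet.of_ceSet_of_eqStar_compl {X Y : Set ℕ} (hX : CESet X) (hY : CESet Y)
    (h : EqStar Y Xᶜ) : ComputableSet X :=
  ComputablePred.computable_iff_re_compl_re'.2 ⟨hX, hY.of_eqStar h⟩

theorem eqStar_compl_of_subsetStar_of_subsetStar {X U V : Set ℕ} (hXU : SubsetStar X U)
    (hUX : SubsetStar U (X ∪ V)) (hVX : Disjoint V X) : EqStar (Uᶜ ∪ V) Xᶜ := by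
  constructor
  · refine hXU.subset ?_
    rintro a ⟨hUV | hV, hX⟩ <;> rw [Set.mem_compl_iff, not_not] at hX
    · exact ⟨hX, hUV⟩
    · exact absurd hX (Set.disjoint_left.1 hVX hV)
  · refine hUX.subset ?_
    rintro a ⟨hX, hUV⟩
    simp only [Set.mem_union, Set.mem_compl_iff, not_or, not_not] at hUV
    exact ⟨hUV.1, fun h => h.elim hX hUV.2⟩

theorem Generates.exists_computableSet_subsetStar {A : Set ℕ} {G : Set (Set ℕ)}
    (hG : Generates A G) (hGcomp : ∀ X ∈ G, ComputableSet X) {W : Set ℕ} (hW : CESet W)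
    (hWA : Disjoint W A) : ∃ U, ComputableSet U ∧ Disjoint U A ∧ SubsetStar W U := by
  obtain ⟨-, -, hGA, hcover⟩ := hG
  obtain ⟨F, hFG, hF, hWF⟩ := hcover W hW hWA
  exact ⟨⋃₀ F, .sUnion hF fun X hX => hGcomp X (hFG hX),
    Set.disjoint_sUnion_left.2 fun X hX => hGA X (hFG hX), hWF⟩

theorem Generates.exists_ceSet_subsetStar_union {A : Set ℕ} {D : ℕ → Set ℕ}
    (hG : Generates A (Set.range D)) (hD : Pairwise (Function.onFun Disjoint D)) {W : Set ℕ}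
    (hW : CESet W) (hWA : Disjoint W A) (i : ℕ) :
    ∃ V, CESet V ∧ Disjoint V (D i) ∧ SubsetStar W (D i ∪ V) := by
  obtain ⟨-, hGce, -, hcover⟩ := hG
  obtain ⟨F, hFG, hF, hWF⟩ := hcover W hW hWA
  refine ⟨⋃₀ (F \ {D i}), .sUnion hF.sdiff fun X hX => hGce X (hFG hX.1), ?_, ?_⟩
  · refine Set.disjoint_sUnion_left.2 fun X ⟨hXF, hXi⟩ => ?_
    obtain ⟨j, rfl⟩ := hFG hXF
    exact hD fun hji => hXi (congrArg D hji)
  · refine hWF.subset (Set.sdiff_subset_sdiff_right fun a ⟨X, hXF, haX⟩ => ?_)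
    by_cases hXi : X = D i
    · exact .inl (hXi ▸ haX)
    · exact .inr ⟨X, ⟨hXF, hXi⟩, haX⟩

theorem stmt_3_general (A : Set ℕ) (R D : ℕ → Set ℕ)
    (hDce : ∀ i, CESet (D i))
    (hDdisj : Pairwise (Function.onFun Disjoint D))
    (hRcomp : ∀ i, ComputableSet (R i))
    (hgenR : Generates A (Set.range R)) (hgenD : Generates A (Set.range D)) :
    ∀ i, ComputableSet (D i) := by
  intro i
  have hDA : Disjoint (D i) A := hgenD.2.2.1 _ (Set.mem_range_self i)
  obtain ⟨U, hU, hUA, hDU⟩ :=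
    hgenR.exists_computableSet_subsetStar (Set.forall_mem_range.2 hRcomp) (hDce i) hDA
  obtain ⟨V, hV, hVD, hUDV⟩ := hgenD.exists_ceSet_subsetStar_union hDdisj hU.ceSet hUA i
  exact .of_ceSet_of_eqStar_compl (hDce i) (hU.compl.ceSet.union hV)
    (eqStar_compl_of_subsetStar_of_subsetStar hDU hUDV hVD)

theorem stmt_3 (A : Set ℕ) (hA : CESet A) (R D : ℕ → Set ℕ)
    (hRce : ∀ i, CESet (R i)) (hDce : ∀ i, CESet (D i))
    (hRdisj : Pairwise (Function.onFun Disjoint R))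
    (hDdisj : Pairwise (Function.onFun Disjoint D))
    (hRcomp : ∀ i, ComputableSet (R i))
    (hgenR : Generates A (Set.range R)) (hgenD : Generates A (Set.range D)) :
    ∀ i, ComputableSet (D i) :=
  stmt_3_general A R D hDce hDdisj hRcomp hgenR hgenD
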